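/- Let n, Δ be positive integers, M : [n] × [n] → ℤ, v : [n] → ℤ, with M̂ = ⌊M/Δ⌋ entrywise, v̂ = ⌊v/Δ⌋ entrywise, and û[i] = min_k (M̂[i,k] + v̂[k]). If k is a minimizer of M[i,k] + v[k], then M̂[i,k] + v̂[k] ≤ û[i] + 1; in particular every min-plus witness for row i lies in the candidate set C_i = {k | M̂[i,k] + v̂[k] ∈ {û[i], û[i]+1}}. -/
import Mathlib


/-- Minimum of an integer-valued function over `Fin n` for `n > 0`. -/
def imin (n : ℕ) (hn : 0 < n) (f : Fin n → ℤ) : ℤ :=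
  Finset.univ.inf' ⟨⟨0, hn⟩, Finset.mem_univ _⟩ f

lemma ediv_add_ediv_le (a b d : ℤ) (hd : 0 < d) : a / d + b / d ≤ (a + b) / d := by
  rw [Int.le_ediv_iff_mul_le hd]
  have ha := Int.ediv_mul_le a (ne_of_gt hd)
  have hb := Int.ediv_mul_le b (ne_of_gt hd)
  linarith [ha, hb, mul_comm (a / d) d]

lemma ediv_add_le (a b d : ℤ) (hd : 0 < d) : (a + b) / d ≤ a / d + b / d + 1 := by
  have h : (a + b) / d < a / d + b / d + 2 := by
    rw [Int.ediv_lt_iff_lt_mul hd]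
    have ha := Int.lt_ediv_add_one_mul_self a hd
    have hb := Int.lt_ediv_add_one_mul_self b hd
    nlinarith
  omega

theorem stmt_3 (n Δ : ℕ) (hn : 0 < n) (hΔ : 0 < Δ)
    (M : Fin n → Fin n → ℤ) (v : Fin n → ℤ) (i : Fin n)
    (Mh : Fin n → Fin n → ℤ) (hMh : ∀ i k, Mh i k = M i k / (Δ : ℤ))
    (vh : Fin n → ℤ) (hvh : ∀ k, vh k = v k / (Δ : ℤ))
    (uh : ℤ) (huh : uh = imin n hn (fun k => Mh i k + vh k))
    (k : Fin n) (hk : ∀ k' : Fin n, M i k + v k ≤ M i k' + v k') :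
    Mh i k + vh k ≤ uh + 1 ∧ (Mh i k + vh k = uh ∨ Mh i k + vh k = uh + 1) := by
  have hd : (0 : ℤ) < (Δ : ℤ) := by exact_mod_cast hΔ
  obtain ⟨k', -, hk'⟩ := Finset.exists_mem_eq_inf' (α := ℤ)
    ⟨(⟨0, hn⟩ : Fin n), Finset.mem_univ _⟩ (fun k => Mh i k + vh k)
  have huh' : uh = Mh i k' + vh k' := by rw [huh]; exact hk'
  have hlow : uh ≤ Mh i k + vh k := by
    rw [huh]
    exact Finset.inf'_le _ (Finset.mem_univ k)
  have h1 : Mh i k + vh k ≤ (M i k + v k) / (Δ : ℤ) := by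
    rw [hMh, hvh]; exact ediv_add_ediv_le _ _ _ hd
  have h2 : (M i k + v k) / (Δ : ℤ) ≤ (M i k' + v k') / (Δ : ℤ) :=
    Int.ediv_le_ediv hd (hk k')
  have h3 : (M i k' + v k') / (Δ : ℤ) ≤ Mh i k' + vh k' + 1 := by
    rw [hMh, hvh]; exact ediv_add_le _ _ _ hd
  constructor
  · omega
  · omega
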